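/- arXiv:2209.02041 — 3 statements merged into one kernel-verified Lean document; each statement's English description precedes it below -/
import Mathlib

section
/- Let (X,r) be a solution and k a positive integer. The diagonal map of the k-cabled solution (X, r^{(k)}) is T^k; that is, for every x ∈ X one has (τ^{(k)}_x)⁻¹(x) = T^k(x), and r^{(k)}(T^k(x), x) = (T^k(x), x). -/
open Function

variable {X : Type*}

/-- The map `r(x,y) = (σ_x(y), τ_y(x))` built from two families of bijections. -/
def ybR (σ τ : X → Equiv.Perm X) : X × X → X × X :=
  fun p => (σ p.1 p.2, τ p.2 p.1)

/-- Apply a map `X × X → X × X` to the first two coordinates of a triple (`r × id`). -/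
def lmap (r : X × X → X × X) : X × X × X → X × X × X :=
  fun p => ((r (p.1, p.2.1)).1, ((r (p.1, p.2.1)).2, p.2.2))

/-- Apply a map `X × X → X × X` to the last two coordinates of a triple (`id × r`). -/
def rmap (r : X × X → X × X) : X × X × X → X × X × X :=
  fun p => (p.1, r p.2)

/-- A finite non-degenerate involutive set-theoretic solution of the Yang--Baxter
equation on a finite set `X` with `|X| > 1`. -/
structure YBSolution (X : Type*) [Fintype X] where
  σ : X → Equiv.Perm X
  τ : X → Equiv.Perm X
  card_gt_one : 1 < Fintype.card X
  involutive : ∀ p : X × X, ybR σ τ (ybR σ τ p) = p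
  braid : lmap (ybR σ τ) ∘ rmap (ybR σ τ) ∘ lmap (ybR σ τ)
        = rmap (ybR σ τ) ∘ lmap (ybR σ τ) ∘ rmap (ybR σ τ)

namespace YBSolution

variable [Fintype X]

/-- The diagonal map `T(x) = τ_x⁻¹(x)`. -/
def T (S : YBSolution X) (x : X) : X := (S.τ x).symm x

/-- The map `U(x) = σ_x⁻¹(x)`, the inverse of the diagonal map. -/
def U (S : YBSolution X) (x : X) : X := (S.σ x).symm x

/-- The `k`-cabled sigma maps (also denoted `π_k`):
`σ^{(k)}_x = σ_x ∘ σ_{U(x)} ∘ ⋯ ∘ σ_{U^{k-1}(x)}`. -/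
def sigmaCab (S : YBSolution X) : ℕ → X → X → X
  | 0, _ => id
  | k + 1, x => ⇑(S.σ x) ∘ S.sigmaCab k (S.U x)

/-- The composition `τ_{U^{k-1}(y)} ∘ ⋯ ∘ τ_{U(y)} ∘ τ_y`. -/
def tauChain (S : YBSolution X) : ℕ → X → X → X
  | 0, _ => id
  | k + 1, y => S.tauChain k (S.U y) ∘ ⇑(S.τ y)

/-- The `k`-cabled tau maps:
`τ^{(k)}_y = T^{k-1} ∘ τ_{U^{k-1}(y)} ∘ ⋯ ∘ τ_{U(y)} ∘ τ_y ∘ T^{-(k-1)}`,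
where `T^{-(k-1)} = U^{k-1}` since `U` is the inverse of `T`. -/
def tauCab (S : YBSolution X) (k : ℕ) (y : X) : X → X :=
  S.T^[k - 1] ∘ S.tauChain k y ∘ S.U^[k - 1]

/-- The `k`-cabled solution `r^{(k)}(x,y) = (σ^{(k)}_x(y), τ^{(k)}_y(x))`. -/
def rCab (S : YBSolution X) (k : ℕ) : X × X → X × X :=
  fun p => (S.sigmaCab k p.1 p.2, S.tauCab k p.2 p.1)

/-- The permutation group `𝒢(X,r)`, generated by the `σ_x`. -/
def G (S : YBSolution X) : Subgroup (Equiv.Perm X) :=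
  Subgroup.closure (Set.range S.σ)

/-- The permutation group `𝒢(X,r^{(k)})` of the `k`-cabled solution,
generated by the `σ^{(k)}_x`. -/
def Gcab (S : YBSolution X) (k : ℕ) : Subgroup (Equiv.Perm X) :=
  Subgroup.closure {g : Equiv.Perm X | ∃ x : X, ⇑g = S.sigmaCab k x}

/-- The orbit of `x` under the diagonal map `T`. -/
def Torbit (S : YBSolution X) (x : X) : Set X := {y | ∃ n : ℕ, S.T^[n] x = y}

/-- The orbit of `x` under `𝒢(X,r)`. -/
def Gorbit (S : YBSolution X) (x : X) : Set X := {y | ∃ g ∈ S.G, g x = y}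

/-- The orbit of `x` under `𝒢(X,r^{(k)})`. -/
def GcabOrbit (S : YBSolution X) (k : ℕ) (x : X) : Set X :=
  {y | ∃ g ∈ S.Gcab k, g x = y}

/-- A solution is indecomposable when `𝒢(X,r)` acts transitively on `X`. -/
def IsIndecomposable (S : YBSolution X) : Prop := ∀ x y : X, ∃ g ∈ S.G, g x = y

end YBSolution

/-!
Involutivity alone does the work. Since `τ_x (T x) = x`, the pair `(T x, x)` is sent by `r` to
`(σ_{T x} x, x)`, and applying `r` once more shows `σ_{T x} x = T x`; symmetrically
`τ_{U x} x = U x`. Hence `U` and `T` are mutually inverse, and along the `T`-orbit of `x` every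
factor `σ_{U^i (T^k x)} = σ_{T^{k-i} x}` of `σ^{(k)}_{T^k x}` fixes the point it is applied to,
while the factors of `τ^{(k)}_x` walk `T x ↦ x ↦ U x ↦ ⋯ ↦ U^{k-1} x`, which `T^{k-1}` brings
back to `x`.
-/

namespace YBSolution

variable [Fintype X] (S : YBSolution X)

lemma σ_apply_U (x : X) : S.σ x (S.U x) = x := Equiv.apply_symm_apply _ _

lemma τ_apply_T (x : X) : S.τ x (S.T x) = x := Equiv.apply_symm_apply _ _

lemma σ_T_apply (x : X) : S.σ (S.T x) x = S.T x := by
  have h := congrArg Prod.snd (S.involutive (S.T x, x))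
  simp only [ybR, τ_apply_T] at h
  exact (S.τ x).injective (h.trans (S.τ_apply_T x).symm)

lemma τ_U_apply (x : X) : S.τ (S.U x) x = S.U x := by
  have h := congrArg Prod.fst (S.involutive (x, S.U x))
  simp only [ybR, σ_apply_U] at h
  exact (S.σ x).injective (h.trans (S.σ_apply_U x).symm)

lemma leftInverse_U_T : LeftInverse S.U S.T := fun x =>
  (Equiv.symm_apply_eq _).mpr (S.σ_T_apply x).symm

lemma leftInverse_T_U : LeftInverse S.T S.U := fun x =>
  (Equiv.symm_apply_eq _).mpr (S.τ_U_apply x).symm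

lemma sigmaCab_iterate_T_self (k : ℕ) (x : X) :
    S.sigmaCab k (S.T^[k] x) x = S.T^[k] x := by
  induction k generalizing x with
  | zero => rfl
  | succ k ih =>
    rw [iterate_succ_apply']
    simp only [sigmaCab, comp_apply, S.leftInverse_U_T _, ih, σ_T_apply]

lemma tauChain_U_self (k : ℕ) (x : X) : S.tauChain k (S.U x) x = S.U^[k] x := by
  induction k generalizing x with
  | zero => rfl
  | succ k ih => simp only [tauChain, comp_apply, τ_U_apply, ih, iterate_succ_apply]

lemma tauCab_iterate_T_self (k : ℕ) (x : X) : S.tauCab k x (S.T^[k] x) = x := by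
  cases k with
  | zero => rfl
  | succ k =>
    have hU : S.U^[k] (S.T^[k + 1] x) = S.T x := by
      rw [iterate_succ_apply, S.leftInverse_U_T.iterate k]
    have hChain : S.tauChain (k + 1) x (S.T x) = S.U^[k] x := by
      simp only [tauChain, comp_apply, τ_apply_T, tauChain_U_self]
    simp only [tauCab, Nat.add_sub_cancel, comp_apply, hU, hChain, S.leftInverse_T_U.iterate k _]

end YBSolution

theorem cabled_diagonal_map_general [Fintype X] (S : YBSolution X) (k : ℕ) (x : X) :
    S.tauCab k x (S.T^[k] x) = x ∧ S.rCab k (S.T^[k] x, x) = (S.T^[k] x, x) := by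
  refine ⟨S.tauCab_iterate_T_self k x, ?_⟩
  simp only [YBSolution.rCab, S.sigmaCab_iterate_T_self, S.tauCab_iterate_T_self]

/-- the diagonal map of the `k`-cabled solution is `T^k`:
`(τ^{(k)}_x)⁻¹(x) = T^k(x)` and `r^{(k)}(T^k(x), x) = (T^k(x), x)`. -/
theorem cabled_diagonal_map [Fintype X] (S : YBSolution X) (k : ℕ) (hk : 0 < k) (x : X) :
    S.tauCab k x (S.T^[k] x) = x ∧ S.rCab k (S.T^[k] x, x) = (S.T^[k] x, x) :=
  cabled_diagonal_map_general S k x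
end

section
/- Let (X,r) be a solution and k, k' positive integers. Then the k'-cabling of the k-cabled solution coincides with the kk'-cabling of the original solution: (r^{(k)})^{(k')} = r^{(kk')} as maps X × X → X × X. -/
open Function

variable {X : Type*}

/-! The maps `T` and `U` of the `k`-cabled solution are `T^k` and `U^k`. Hence its `σ`-product
`σ'_x ∘ σ'_{U^k x} ∘ ⋯` over `k'` factors unfolds into the `σ`-product over `kk'` factors
along the `U`-orbit of `x`. The same holds for the `τ`-chains, where the conjugations by
`T^{k-1}` between consecutive factors cancel, leaving a single conjugation by
`T^{k(k'-1)} ∘ T^{k-1} = T^{kk'-1}`. -/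

namespace YBSolution

variable [Fintype X] (S : YBSolution X)

lemma T_U (x : X) : S.T (S.U x) = x := by
  have h := congrArg Prod.fst (S.involutive (x, S.U x))
  simp only [ybR, σ_apply_U] at h
  have hτ : S.τ (S.U x) x = S.U x := (S.σ x).injective (h.trans (S.σ_apply_U x).symm)
  rw [T, Equiv.symm_apply_eq]
  exact hτ.symm

lemma U_T (x : X) : S.U (S.T x) = x := by
  have h := congrArg Prod.snd (S.involutive (S.T x, x))
  simp only [ybR, τ_apply_T] at h
  have hσ : S.σ (S.T x) x = S.T x := (S.τ x).injective (h.trans (S.τ_apply_T x).symm)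
  rw [U, Equiv.symm_apply_eq]
  exact hσ.symm

lemma T_iterate_U_iterate (n : ℕ) (x : X) : S.T^[n] (S.U^[n] x) = x :=
  (LeftInverse.iterate S.T_U n) x

lemma U_iterate_T_iterate (n : ℕ) (x : X) : S.U^[n] (S.T^[n] x) = x :=
  (LeftInverse.iterate S.U_T n) x

lemma sigmaCab_apply_U_iterate : ∀ (n : ℕ) (x : X), S.sigmaCab n x (S.U^[n] x) = x
  | 0, _ => rfl
  | n + 1, x => by
    simp only [sigmaCab, comp_apply, iterate_succ_apply, sigmaCab_apply_U_iterate n, σ_apply_U]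

lemma tauChain_apply_T : ∀ (n : ℕ) (x : X), S.tauChain n x (S.T x) = S.T (S.U^[n] x)
  | 0, _ => rfl
  | n + 1, x => by
    simp only [tauChain, comp_apply, iterate_succ_apply, τ_apply_T]
    rw [← tauChain_apply_T n (S.U x), T_U]

lemma tauCab_apply_T_iterate (n : ℕ) (x : X) : S.tauCab n x (S.T^[n] x) = x := by
  rcases n with _ | n
  · rfl
  · simp only [tauCab, comp_apply, Nat.add_sub_cancel, iterate_succ_apply, U_iterate_T_iterate,
      tauChain_apply_T]
    rw [← iterate_succ_apply S.U, ← iterate_succ_apply S.T, T_iterate_U_iterate]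

lemma sigmaCab_add : ∀ (a b : ℕ) (x : X),
    S.sigmaCab (a + b) x = S.sigmaCab a x ∘ S.sigmaCab b (S.U^[a] x)
  | 0, b, x => by rw [Nat.zero_add]; rfl
  | a + 1, b, x => by
    rw [Nat.add_right_comm, sigmaCab, sigmaCab, sigmaCab_add a b, iterate_succ_apply, comp_assoc]

lemma tauChain_add : ∀ (a b : ℕ) (y : X),
    S.tauChain (a + b) y = S.tauChain b (S.U^[a] y) ∘ S.tauChain a y
  | 0, b, y => by rw [Nat.zero_add]; rfl
  | a + 1, b, y => by
    rw [Nat.add_right_comm, tauChain, tauChain, tauChain_add a b, iterate_succ_apply, comp_assoc]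

variable {S} (S' : YBSolution X) (k : ℕ)

lemma U_eq_iterate_of_cabling (hσ : ∀ x : X, ⇑(S'.σ x) = S.sigmaCab k x) :
    S'.U = S.U^[k] := by
  funext x
  rw [U, Equiv.symm_apply_eq, hσ, sigmaCab_apply_U_iterate]

lemma T_eq_iterate_of_cabling (hτ : ∀ x : X, ⇑(S'.τ x) = S.tauCab k x) :
    S'.T = S.T^[k] := by
  funext x
  rw [T, Equiv.symm_apply_eq, hτ, tauCab_apply_T_iterate]

lemma sigmaCab_eq_of_cabling (hσ : ∀ x : X, ⇑(S'.σ x) = S.sigmaCab k x) :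
    ∀ (m : ℕ) (x : X), S'.sigmaCab m x = S.sigmaCab (k * m) x
  | 0, _ => rfl
  | m + 1, x => by
    rw [sigmaCab, sigmaCab_eq_of_cabling hσ m, U_eq_iterate_of_cabling S' k hσ, hσ,
      Nat.mul_succ, Nat.add_comm, sigmaCab_add]

lemma tauChain_eq_of_cabling (hσ : ∀ x : X, ⇑(S'.σ x) = S.sigmaCab k x)
    (hτ : ∀ x : X, ⇑(S'.τ x) = S.tauCab k x) : ∀ (m : ℕ) (y : X),
    S'.tauChain m y = S.T^[k - 1] ∘ S.tauChain (k * m) y ∘ S.U^[k - 1]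
  | 0, _ => by
    funext x
    exact (S.T_iterate_U_iterate (k - 1) x).symm
  | m + 1, y => by
    funext x
    simp only [tauChain, comp_apply, tauChain_eq_of_cabling hσ hτ m,
      U_eq_iterate_of_cabling S' k hσ, hτ, tauCab, U_iterate_T_iterate]
    rw [Nat.mul_succ, Nat.add_comm, tauChain_add, comp_apply]

lemma tauCab_eq_of_cabling (hσ : ∀ x : X, ⇑(S'.σ x) = S.sigmaCab k x)
    (hτ : ∀ x : X, ⇑(S'.τ x) = S.tauCab k x) (m : ℕ) (y : X) :
    S'.tauCab m y = S.tauCab (k * m) y := by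
  rcases m with _ | m
  · rfl
  · have hexp : k * (m + 1) - 1 = k * m + (k - 1) := by
      rcases k.eq_zero_or_pos with rfl | hk
      · simp
      · rw [Nat.mul_succ]; omega
    funext x
    rw [tauCab, tauCab, Nat.add_sub_cancel, tauChain_eq_of_cabling S' k hσ hτ,
      U_eq_iterate_of_cabling S' k hσ, T_eq_iterate_of_cabling S' k hτ,
      ← iterate_mul, ← iterate_mul, hexp]
    simp only [comp_apply, ← iterate_add_apply, Nat.add_comm (k - 1)]

end YBSolution

theorem cabling_iterate_general [Fintype X] (S S' : YBSolution X) (k k' : ℕ)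
    (hσ : ∀ x : X, ⇑(S'.σ x) = S.sigmaCab k x)
    (hτ : ∀ x : X, ⇑(S'.τ x) = S.tauCab k x) :
    S'.rCab k' = S.rCab (k * k') := by
  funext p
  simp only [YBSolution.rCab, YBSolution.sigmaCab_eq_of_cabling S' k hσ,
    YBSolution.tauCab_eq_of_cabling S' k hσ hτ]

/-- cabling the `k`-cabled solution by `k'` gives the `kk'`-cabling:
if `S'` is the `k`-cabled solution of `S` (its `σ` and `τ` maps are `σ^{(k)}` and
`τ^{(k)}` of `S`), then `(r^{(k)})^{(k')} = r^{(kk')}`. -/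
theorem cabling_iterate [Fintype X] (S S' : YBSolution X) (k k' : ℕ)
    (hk : 0 < k) (hk' : 0 < k')
    (hσ : ∀ x : X, ⇑(S'.σ x) = S.sigmaCab k x)
    (hτ : ∀ x : X, ⇑(S'.τ x) = S.tauCab k x) :
    S'.rCab k' = S.rCab (k * k') :=
  cabling_iterate_general S S' k k' hσ hτ
end

section
/- Let (X,r) be a solution and k a positive integer. If x, x' ∈ X satisfy σ_x = σ_{x'}, then σ^{(k)}_x = σ^{(k)}_{x'}. Consequently, if (X,r) is retractable (i.e. σ_x = σ_{x'} for some x ≠ x'), then so is its k-cabling (X, r^{(k)}). -/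
open Function

variable {X : Type*}

/-! If `σ_x = σ_{x'}`, take `y = U x'`, so that `σ_x y = x'`. Involutivity then gives
`τ_y x = σ_{x'}⁻¹ x = U x`, and the first component of the braid relation at `(x, y, ·)`
reads `σ_{x'} σ_{U x} = σ_x σ_{U x'}`; cancelling `σ_x = σ_{x'}` leaves `σ_{U x} = σ_{U x'}`.
Induction on `k` along `σ^{(k+1)}_x = σ_x ∘ σ^{(k)}_{U x}` finishes the proof. -/

namespace YBSolution

variable [Fintype X] (S : YBSolution X)

theorem sigma_sigma_apply_tau (x y : X) : S.σ (S.σ x y) (S.τ y x) = x :=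
  congrArg Prod.fst (S.involutive (x, y))

theorem sigma_sigma_apply_mul_sigma_tau (x y : X) :
    S.σ (S.σ x y) * S.σ (S.τ y x) = S.σ x * S.σ y :=
  Equiv.ext fun z => congrArg Prod.fst (congrFun S.braid (x, y, z))

variable {S}

theorem sigma_U_eq_of_sigma_eq {x x' : X} (h : S.σ x = S.σ x') :
    S.σ (S.U x) = S.σ (S.U x') := by
  set y := S.U x'
  have hy : S.σ x y = x' := by rw [h]; exact (S.σ x').apply_symm_apply x'
  have hτ : S.τ y x = S.U x := by
    rw [U, h, Equiv.eq_symm_apply, ← hy]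
    exact S.sigma_sigma_apply_tau x y
  have hbraid := S.sigma_sigma_apply_mul_sigma_tau x y
  rw [hy, hτ, ← h] at hbraid
  exact mul_left_cancel hbraid

theorem sigmaCab_eq_of_sigma_eq {x x' : X} (h : S.σ x = S.σ x') (k : ℕ) :
    S.sigmaCab k x = S.sigmaCab k x' := by
  induction k generalizing x x' with
  | zero => rfl
  | succ k ih => simp only [sigmaCab, h, ih (sigma_U_eq_of_sigma_eq h)]

end YBSolution

theorem cabling_retractable_general [Fintype X] (S : YBSolution X) (k : ℕ) :
    (∀ x x' : X, S.σ x = S.σ x' → S.sigmaCab k x = S.sigmaCab k x') ∧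
    ((∃ x x' : X, x ≠ x' ∧ S.σ x = S.σ x') →
      ∃ x x' : X, x ≠ x' ∧ S.sigmaCab k x = S.sigmaCab k x') :=
  ⟨fun _ _ h => YBSolution.sigmaCab_eq_of_sigma_eq h k,
    fun ⟨x, x', hne, h⟩ => ⟨x, x', hne, YBSolution.sigmaCab_eq_of_sigma_eq h k⟩⟩

/-- `σ_x = σ_{x'}` implies `σ^{(k)}_x = σ^{(k)}_{x'}`; consequently
a retractable solution has retractable cablings. -/
theorem cabling_retractable [Fintype X] (S : YBSolution X) (k : ℕ) (hk : 0 < k) :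
    (∀ x x' : X, S.σ x = S.σ x' → S.sigmaCab k x = S.sigmaCab k x') ∧
    ((∃ x x' : X, x ≠ x' ∧ S.σ x = S.σ x') →
      ∃ x x' : X, x ≠ x' ∧ S.sigmaCab k x = S.sigmaCab k x') :=
  cabling_retractable_general S k
end
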